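/- Let t₁ : ℝ → ℝ assign to each a the unique real solution t of t = cosh(t + a)·e^{-(t+a)}. Then t₁(a) → +∞ as a → -∞ and t₁(a) → 1/2 as a → +∞. -/

import Mathlib

/-!
Since `cosh x * exp (-x) = (1 + exp (-2x)) / 2`, the solution satisfies
`t = (1 + exp (-2 (t + a))) / 2`. Hence `t > 1/2`, and `exp y ≥ 1 + y` gives `t ≥ (1 - a) / 2`,
which tends to `+∞` as `a → -∞`; feeding `t > 1/2` back into the exponent gives
`t ≤ (1 + exp (-(2a + 1))) / 2`, which tends to `1/2` as `a → +∞`.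
-/

open Real Filter

theorem Real.cosh_mul_exp_neg (x : ℝ) : cosh x * exp (-x) = (1 + exp (-(2 * x))) / 2 := by
  rw [cosh_eq, show -(2 * x) = -x + -x by ring, exp_add, exp_neg]
  field_simp

section FixedPoint

variable {a t : ℝ} (ht : t = (1 + exp (-(2 * (t + a)))) / 2)
include ht

theorem half_lt_of_eq_one_add_exp : 1 / 2 < t := by
  linarith [exp_pos (-(2 * (t + a)))]

theorem one_sub_div_two_le_of_eq_one_add_exp : (1 - a) / 2 ≤ t := by
  linarith [add_one_le_exp (-(2 * (t + a)))]

theorem le_one_add_exp_div_two_of_eq_one_add_exp : t ≤ (1 + exp (-(2 * a + 1))) / 2 := by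
  have hexp : exp (-(2 * (t + a))) ≤ exp (-(2 * a + 1)) :=
    exp_le_exp.mpr (by linarith [half_lt_of_eq_one_add_exp ht])
  linarith

end FixedPoint

/-- `t₁ a` is the unique solution of `t = cosh (t + a) * exp (-(t + a))`.
Then `t₁ a → +∞` as `a → -∞` and `t₁ a → 1/2` as `a → +∞`. -/
theorem stmt2 (t₁ : ℝ → ℝ)
    (h : ∀ a t : ℝ, t = Real.cosh (t + a) * Real.exp (-(t + a)) ↔ t = t₁ a) :
    Filter.Tendsto t₁ Filter.atBot Filter.atTop ∧
    Filter.Tendsto t₁ Filter.atTop (nhds (1 / 2)) := by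
  have hfix (a : ℝ) : t₁ a = (1 + exp (-(2 * (t₁ a + a)))) / 2 := by
    rw [← cosh_mul_exp_neg]
    exact (h a (t₁ a)).mpr rfl
  have hlower : Tendsto (fun a : ℝ => (1 - a) / 2) atBot atTop :=
    (tendsto_atTop_add_const_left _ 1 tendsto_neg_atBot_atTop).atTop_div_const two_pos
  have hupper : Tendsto (fun a : ℝ => (1 + exp (-(2 * a + 1))) / 2) atTop (nhds (1 / 2)) := by
    have hexp : Tendsto (fun a : ℝ => exp (-(2 * a + 1))) atTop (nhds 0) :=
      tendsto_exp_atBot.comp <| tendsto_neg_atTop_atBot.comp <|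
        tendsto_atTop_add_const_right _ 1 (tendsto_id.const_mul_atTop two_pos)
    simpa using (hexp.const_add 1).div_const 2
  exact ⟨tendsto_atTop_mono (fun a => one_sub_div_two_le_of_eq_one_add_exp (hfix a)) hlower,
    tendsto_of_tendsto_of_tendsto_of_le_of_le tendsto_const_nhds hupper
      (fun a => (half_lt_of_eq_one_add_exp (hfix a)).le)
      (fun a => le_one_add_exp_div_two_of_eq_one_add_exp (hfix a))⟩
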